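/- Characterization of the subdifferential of the ℓ₁/ℓ∞ norm on matrices: for B, Z ∈ ℝ^{p×r}, Z is a subgradient of the function M ↦ ‖M‖_{1,∞} at B if and only if: (i) for every j ∈ RowSupp(B), z_j^(k) = t_j^(k) · sign(b_j^(k)) for all k ∈ M_j(B) and z_j^(k) = 0 for all k ∉ M_j(B), for some numbers t_j^(k) ≥ 0 with Σ_{k ∈ M_j(B)} t_j^(k) = 1; and (ii) for every j ∉ RowSupp(B), Σ_{k=1}^r |z_j^(k)| ≤ 1. -/
import Mathlib


open scoped BigOperators Classical

noncomputable section

/-- Trace inner product on `p × r` real matrices. -/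
def matInner {p r : ℕ} (M N : Matrix (Fin p) (Fin r) ℝ) : ℝ :=
  ∑ j, ∑ k, M j k * N j k

/-- `Z` is a subgradient of `g` at `M₀`. -/
def IsSubgradientAt {p r : ℕ} (g : Matrix (Fin p) (Fin r) ℝ → ℝ)
    (Z M₀ : Matrix (Fin p) (Fin r) ℝ) : Prop :=
  ∀ M : Matrix (Fin p) (Fin r) ℝ, g M₀ + matInner Z (M - M₀) ≤ g M

/-- The `ℓ₁/ℓ∞` norm `‖M‖_{1,∞} = Σ_j max_k |m_j^(k)|`. -/
def norm1inf {p r : ℕ} (M : Matrix (Fin p) (Fin r) ℝ) : ℝ :=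
  ∑ j, ⨆ k, |M j k|

/-- `M_j(M)`: the set of column indices attaining the (positive) maximum magnitude
in row `j` of `M`. -/
def maxMagSet {p r : ℕ} (M : Matrix (Fin p) (Fin r) ℝ) (j : Fin p) : Finset (Fin r) :=
  Finset.univ.filter fun k => |M j k| = (⨆ l, |M j l|) ∧ 0 < |M j k|

section Aux

variable {r : ℕ}

lemma mul_sign_self (x : ℝ) : x * Real.sign x = |x| := by
  rcases lt_trichotomy x 0 with h | h | h
  · rw [Real.sign_of_neg h, abs_of_neg h]; ring
  · simp [h]
  · rw [Real.sign_of_pos h, abs_of_pos h]; ring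

lemma abs_sign_le (x : ℝ) : |Real.sign x| ≤ 1 := by
  rcases Real.sign_apply_eq x with h | h | h <;> rw [h] <;> norm_num

lemma bddAboveAbs (b : Fin r → ℝ) : BddAbove (Set.range fun k => |b k|) :=
  (Set.finite_range _).bddAbove

lemma le_supAbs (b : Fin r → ℝ) (k : Fin r) : |b k| ≤ ⨆ l, |b l| :=
  le_ciSup (bddAboveAbs b) k

lemma supAbs_nonneg [Nonempty (Fin r)] (b : Fin r → ℝ) : 0 ≤ ⨆ l, |b l| :=
  le_trans (abs_nonneg _) (le_supAbs b (Classical.arbitrary _))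

lemma exists_supAbs [Nonempty (Fin r)] (b : Fin r → ℝ) : ∃ k, |b k| = ⨆ l, |b l| := by
  obtain ⟨k, hk⟩ := Finite.exists_max fun k => |b k|
  exact ⟨k, le_antisymm (le_supAbs b k) (ciSup_le hk)⟩

/-- Row-wise subgradient condition is equivalent to `‖z‖₁ ≤ 1` and `⟨z,b⟩ = ‖b‖∞`. -/
lemma row_subgrad_iff [Nonempty (Fin r)] (b z : Fin r → ℝ) :
    (∀ v : Fin r → ℝ, (⨆ k, |b k|) + ∑ k, z k * (v k - b k) ≤ ⨆ k, |v k|) ↔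
      (∑ k, |z k|) ≤ 1 ∧ (∑ k, z k * b k) = ⨆ k, |b k| := by
  constructor
  · intro h
    have h0 := h (fun _ => 0)
    simp only [zero_sub, mul_neg, Finset.sum_neg_distrib, abs_zero, ciSup_const] at h0
    -- h0 : (⨆ k, |b k|) + -∑ k, z k * b k ≤ 0
    have h2 := h (fun k => 2 * b k)
    have hsup2 : (⨆ k, |2 * b k|) ≤ 2 * ⨆ k, |b k| := by
      apply ciSup_le
      intro k
      rw [abs_mul]
      simp only [abs_two]
      nlinarith [le_supAbs b k]
    have hsum2 : ∑ k, z k * (2 * b k - b k) = ∑ k, z k * b k := by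
      apply Finset.sum_congr rfl; intro k _; ring
    rw [hsum2] at h2
    have hge : (⨆ k, |b k|) ≤ ∑ k, z k * b k := by linarith
    have hle : (∑ k, z k * b k) ≤ ⨆ k, |b k| := by linarith [hsup2.trans' h2]
    have heq : (∑ k, z k * b k) = ⨆ k, |b k| := le_antisymm hle hge
    refine ⟨?_, heq⟩
    have hs := h (fun k => Real.sign (z k))
    have hsupS : (⨆ k, |Real.sign (z k)|) ≤ 1 := ciSup_le fun k => abs_sign_le _
    have hsumS : ∑ k, z k * (Real.sign (z k) - b k) = (∑ k, |z k|) - ∑ k, z k * b k := by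
      rw [← Finset.sum_sub_distrib]
      apply Finset.sum_congr rfl; intro k _
      rw [mul_sub, mul_sign_self]
    rw [hsumS] at hs
    have := hs.trans hsupS
    linarith
  · rintro ⟨h1, h2⟩ v
    have key : (∑ k, z k * v k) ≤ ⨆ k, |v k| := by
      have step1 : (∑ k, z k * v k) ≤ ∑ k, |z k| * ⨆ l, |v l| := by
        apply Finset.sum_le_sum; intro k _
        calc z k * v k ≤ |z k * v k| := le_abs_self _
          _ = |z k| * |v k| := abs_mul _ _
          _ ≤ |z k| * ⨆ l, |v l| := mul_le_mul_of_nonneg_left (le_supAbs v k) (abs_nonneg _)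
      rw [← Finset.sum_mul] at step1
      have := mul_le_mul_of_nonneg_right h1 (supAbs_nonneg v)
      rw [one_mul] at this
      linarith
    have expand : ∑ k, z k * (v k - b k) = (∑ k, z k * v k) - ∑ k, z k * b k := by
      rw [← Finset.sum_sub_distrib]
      apply Finset.sum_congr rfl; intro k _; ring
    rw [expand, h2]
    linarith

/-- On a nonzero row, the dual-norm conditions are equivalent to the `t`-characterization. -/
lemma char_nonzero [Nonempty (Fin r)] (b z : Fin r → ℝ) (hb : ∃ k, b k ≠ 0) :
    ((∑ k, |z k|) ≤ 1 ∧ (∑ k, z k * b k) = ⨆ k, |b k|) ↔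
      ∃ t : Fin r → ℝ, (∀ k, 0 ≤ t k) ∧
        (∑ k ∈ Finset.univ.filter fun k => |b k| = (⨆ l, |b l|) ∧ 0 < |b k|, t k) = 1 ∧
        (∀ k ∈ Finset.univ.filter fun k => |b k| = (⨆ l, |b l|) ∧ 0 < |b k|,
          z k = t k * Real.sign (b k)) ∧
        (∀ k, (k ∉ Finset.univ.filter fun k => |b k| = (⨆ l, |b l|) ∧ 0 < |b k|) → z k = 0) := by
  set S : Finset (Fin r) := Finset.univ.filter fun k => |b k| = (⨆ l, |b l|) ∧ 0 < |b k| with hS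
  obtain ⟨k₀, hk₀⟩ := hb
  have hsup_pos : 0 < ⨆ l, |b l| := lt_of_lt_of_le (abs_pos.mpr hk₀) (le_supAbs b k₀)
  have memS : ∀ k, k ∈ S ↔ (|b k| = ⨆ l, |b l|) := by
    intro k
    simp only [hS, Finset.mem_filter, Finset.mem_univ, true_and]
    constructor
    · exact fun h => h.1
    · intro h; exact ⟨h, h ▸ hsup_pos⟩
  constructor
  · rintro ⟨h1, h2⟩
    -- termwise bounds
    have hub : ∀ k ∈ Finset.univ, z k * b k ≤ |z k| * ⨆ l, |b l| := by
      intro k _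
      calc z k * b k ≤ |z k * b k| := le_abs_self _
        _ = |z k| * |b k| := abs_mul _ _
        _ ≤ |z k| * ⨆ l, |b l| := mul_le_mul_of_nonneg_left (le_supAbs b k) (abs_nonneg _)
    have hsum_ub : (∑ k, |z k| * ⨆ l, |b l|) ≤ ⨆ l, |b l| := by
      rw [← Finset.sum_mul]
      nlinarith
    have e1 : ∀ k ∈ Finset.univ, z k * b k = |z k| * ⨆ l, |b l| := by
      have hle : (∑ k, z k * b k) ≤ ∑ k, |z k| * ⨆ l, |b l| := Finset.sum_le_sum hub
      have : (∑ k, |z k| * ⨆ l, |b l|) = ∑ k, z k * b k := by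
        rw [h2]; exact le_antisymm hsum_ub (h2 ▸ hle)
      exact fun k hk => (Finset.sum_eq_sum_iff_of_le hub).mp this.symm k hk
    have hl1 : (∑ k, |z k|) = 1 := by
      have : (∑ k, |z k|) * (⨆ l, |b l|) = 1 * ⨆ l, |b l| := by
        calc (∑ k, |z k|) * (⨆ l, |b l|) = ∑ k, |z k| * ⨆ l, |b l| := Finset.sum_mul _ _ _
          _ = ∑ k, z k * b k := (Finset.sum_congr rfl e1).symm
          _ = ⨆ l, |b l| := h2
          _ = 1 * ⨆ l, |b l| := (one_mul _).symm
      exact mul_right_cancel₀ (ne_of_gt hsup_pos) this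
    -- each k: z k b k = |z k| |b k| and |z k| (sup - |b k|) = 0
    have e2 : ∀ k, z k * b k = |z k| * |b k| ∧ (|z k| = 0 ∨ |b k| = ⨆ l, |b l|) := by
      intro k
      have h₁ : z k * b k ≤ |z k| * |b k| := by
        rw [← abs_mul]; exact le_abs_self _
      have h₂ : |z k| * |b k| ≤ |z k| * ⨆ l, |b l| :=
        mul_le_mul_of_nonneg_left (le_supAbs b k) (abs_nonneg _)
      have h₃ := e1 k (Finset.mem_univ k)
      constructor
      · linarith
      · rcases eq_or_ne (|z k|) 0 with h | h
        · exact Or.inl h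
        · right
          have : |z k| * |b k| = |z k| * ⨆ l, |b l| := by linarith
          exact mul_left_cancel₀ h this
    have hzero : ∀ k, k ∉ S → z k = 0 := by
      intro k hk
      rw [memS] at hk
      rcases (e2 k).2 with h | h
      · exact abs_eq_zero.mp h
      · exact absurd h hk
    refine ⟨fun k => |z k|, fun k => abs_nonneg _, ?_, ?_, hzero⟩
    · rw [← hl1]
      apply Finset.sum_subset (Finset.subset_univ S)
      intro k _ hk
      exact abs_eq_zero.mpr (hzero k hk)
    · intro k hk
      have hbk : b k ≠ 0 := by
        rw [hS, Finset.mem_filter] at hk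
        exact abs_pos.mp hk.2.2
      have he := (e2 k).1
      rcases lt_or_gt_of_ne hbk with h | h
      · rw [Real.sign_of_neg h, abs_of_neg h] at *
        nlinarith
      · rw [Real.sign_of_pos h, abs_of_pos h] at *
        nlinarith
  · rintro ⟨t, ht0, htsum, htz, hz0⟩
    have hzabs : ∀ k ∈ S, |z k| = t k := by
      intro k hk
      have hbk : b k ≠ 0 := by
        rw [hS, Finset.mem_filter] at hk
        exact abs_pos.mp hk.2.2
      rw [htz k hk, abs_mul]
      rcases Real.sign_apply_eq_of_ne_zero (b k) hbk with h | h <;>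
        rw [h] <;> simp [abs_of_nonneg (ht0 k)]
    have hl1 : (∑ k, |z k|) = 1 := by
      calc (∑ k, |z k|) = ∑ k ∈ S, |z k| :=
            (Finset.sum_subset (Finset.subset_univ S)
              (fun k _ hk => abs_eq_zero.mpr (hz0 k hk))).symm
        _ = ∑ k ∈ S, t k := Finset.sum_congr rfl hzabs
        _ = 1 := htsum
    refine ⟨le_of_eq hl1, ?_⟩
    calc (∑ k, z k * b k) = ∑ k ∈ S, z k * b k :=
          (Finset.sum_subset (Finset.subset_univ S)
            (fun k _ hk => by rw [hz0 k hk, zero_mul])).symm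
      _ = ∑ k ∈ S, t k * ⨆ l, |b l| := by
          apply Finset.sum_congr rfl
          intro k hk
          have hbk : |b k| = ⨆ l, |b l| := (memS k).mp hk
          rw [htz k hk, mul_assoc, mul_comm (Real.sign (b k)) (b k), mul_sign_self, hbk]
      _ = (∑ k ∈ S, t k) * ⨆ l, |b l| := (Finset.sum_mul _ _ _).symm
      _ = ⨆ l, |b l| := by rw [htsum, one_mul]

/-- Subgradient condition decomposes over rows. -/
lemma subgrad_decomp {p : ℕ} [Nonempty (Fin r)] (B Z : Matrix (Fin p) (Fin r) ℝ) :
    IsSubgradientAt norm1inf Z B ↔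
      ∀ j, ∀ v : Fin r → ℝ,
        (⨆ k, |B j k|) + (∑ k, Z j k * (v k - B j k)) ≤ ⨆ k, |v k| := by
  constructor
  · intro h j v
    have hM := h (Matrix.updateRow B j v)
    have hrow : ∀ j' k, Matrix.updateRow B j v j' k = if j' = j then v k else B j' k := by
      intro j' k
      by_cases hj : j' = j
      · subst hj; simp [Matrix.updateRow_self]
      · simp [Matrix.updateRow_ne hj, hj]
    have hnorm : norm1inf (Matrix.updateRow B j v) =
        (∑ j' ∈ Finset.univ.erase j, ⨆ k, |B j' k|) + ⨆ k, |v k| := by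
      unfold norm1inf
      rw [← Finset.add_sum_erase _ _ (Finset.mem_univ j), add_comm]
      have e1 : (⨆ k, |Matrix.updateRow B j v j k|) = ⨆ k, |v k| := by
        simp [Matrix.updateRow_self]
      have e2 : ∀ j' ∈ Finset.univ.erase j,
          (⨆ k, |Matrix.updateRow B j v j' k|) = ⨆ k, |B j' k| := by
        intro j' hj'
        rw [Matrix.updateRow_ne (Finset.mem_erase.mp hj').1]
      rw [e1, Finset.sum_congr rfl e2]
    have hinner : matInner Z (Matrix.updateRow B j v - B) = ∑ k, Z j k * (v k - B j k) := by
      unfold matInner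
      rw [Finset.sum_eq_single j]
      · apply Finset.sum_congr rfl
        intro k _
        rw [Matrix.sub_apply, hrow j k, if_pos rfl]
      · intro j' _ hj'
        apply Finset.sum_eq_zero
        intro k _
        rw [Matrix.sub_apply, hrow j' k, if_neg hj']
        ring
      · intro h'; exact absurd (Finset.mem_univ j) h'
    have hnormB : norm1inf B = (∑ j' ∈ Finset.univ.erase j, ⨆ k, |B j' k|) + ⨆ k, |B j k| := by
      unfold norm1inf
      rw [← Finset.add_sum_erase _ _ (Finset.mem_univ j), add_comm]
    rw [hnorm, hinner, hnormB] at hM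
    linarith
  · intro h M
    unfold norm1inf matInner
    rw [← Finset.sum_add_distrib]
    apply Finset.sum_le_sum
    intro j _
    have := h j (M j)
    simp only [Matrix.sub_apply] at *
    exact this

end Aux

/-- Characterization of the subdifferential of the `ℓ₁/ℓ∞` norm:
`Z ∈ ∂‖·‖_{1,∞}(B)` iff (i) on every nonzero row `j` of `B`, `Z` is supported on the
maximizing set `M_j(B)`, where it equals `t_j^(k) · sign(b_j^(k))` with `t_j^(k) ≥ 0`
summing to `1`; and (ii) on every zero row of `B`, the `ℓ₁` norm of the row of `Z` is
at most `1`. -/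
theorem subdifferential_l1_linf_char
    (p r : ℕ) (hp : 1 ≤ p) (hr : 1 ≤ r)
    (B Z : Matrix (Fin p) (Fin r) ℝ) :
    IsSubgradientAt norm1inf Z B ↔
      ((∀ j : Fin p, (∃ k, B j k ≠ 0) →
          ∃ t : Fin r → ℝ, (∀ k, 0 ≤ t k) ∧ (∑ k ∈ maxMagSet B j, t k) = 1 ∧
            (∀ k ∈ maxMagSet B j, Z j k = t k * Real.sign (B j k)) ∧
            (∀ k, k ∉ maxMagSet B j → Z j k = 0)) ∧
        (∀ j : Fin p, (∀ k, B j k = 0) → (∑ k, |Z j k|) ≤ 1)) := by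
  haveI : Nonempty (Fin r) := ⟨⟨0, hr⟩⟩
  have hmms : ∀ j, maxMagSet B j =
      (Finset.univ.filter fun k => |B j k| = (⨆ l, |B j l|) ∧ 0 < |B j k|) := fun j => rfl
  rw [subgrad_decomp]
  constructor
  · intro h
    constructor
    · intro j hb
      have hrow := (row_subgrad_iff (B j) (Z j)).mp (h j)
      have := (char_nonzero (B j) (Z j) hb).mp hrow
      rw [← hmms j] at this
      exact this
    · intro j _
      exact ((row_subgrad_iff (B j) (Z j)).mp (h j)).1
  · rintro ⟨h1, h2⟩ j
    apply (row_subgrad_iff (B j) (Z j)).mpr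
    by_cases hb : ∀ k, B j k = 0
    · refine ⟨h2 j hb, ?_⟩
      have e1 : (∑ k, Z j k * B j k) = 0 := by
        apply Finset.sum_eq_zero
        intro k _
        rw [hb k, mul_zero]
      have e2 : (⨆ k, |B j k|) = 0 := by
        simp only [hb, abs_zero, ciSup_const]
      rw [e1, e2]
    · push_neg at hb
      have := h1 j hb
      rw [hmms j] at this
      exact (char_nonzero (B j) (Z j) hb).mpr this
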